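/- arXiv:2403.11707 — 3 statements merged into one kernel-verified Lean document; each statement's English description precedes it below -/
import Mathlib

section
/- Let M⁻, M⁺, z, a ∈ ℝ and σ ∈ {0,1} with M⁻ ≤ z ≤ M⁺. If a ≥ z, a ≤ z − M⁻·(1−σ), 0 ≤ a, and a ≤ M⁺·σ, then a = max(z, 0). Hence the big-M formulation exactly represents the ReLU activation: its feasible points are precisely those with a = max(z,0). -/
/-- Exactness of the big-M ReLU formulation: every feasible point satisfies a = max(z,0), and
hence the feasible points are precisely those with a = max(z,0). -/
theorem bigM_relu_exact (Mminus Mplus z : ℝ) (h1 : Mminus ≤ z) (h2 : z ≤ Mplus) :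
    (∀ a σ : ℝ, (σ = 0 ∨ σ = 1) → a ≥ z → a ≤ z - Mminus * (1 - σ) → 0 ≤ a →
      a ≤ Mplus * σ → a = max z 0) ∧
    (∀ a : ℝ,
      (∃ σ : ℝ, (σ = 0 ∨ σ = 1) ∧ a ≥ z ∧ a ≤ z - Mminus * (1 - σ) ∧ 0 ≤ a ∧ a ≤ Mplus * σ)
        ↔ a = max z 0) := by
  have fwd : ∀ a σ : ℝ, (σ = 0 ∨ σ = 1) → a ≥ z → a ≤ z - Mminus * (1 - σ) → 0 ≤ a →
      a ≤ Mplus * σ → a = max z 0 := by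
    intro a σ hσ hge hle h0 hub
    rcases hσ with rfl | rfl
    · simp at hub
      have ha : a = 0 := le_antisymm hub h0
      have hz : z ≤ 0 := ha ▸ hge
      rw [ha, max_eq_right hz]
    · simp at hle
      have ha : a = z := le_antisymm hle hge
      have hz : 0 ≤ z := ha ▸ h0
      rw [ha, max_eq_left hz]
  refine ⟨fwd, fun a => ⟨fun ⟨σ, hσ, h1, h2, h3, h4⟩ => fwd a σ hσ h1 h2 h3 h4, ?_⟩⟩
  rintro rfl
  rcases le_or_gt 0 z with hz | hz
  · refine ⟨1, Or.inr rfl, ?_⟩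
    rw [max_eq_left hz]
    refine ⟨le_refl z, by ring_nf; linarith, hz, by linarith⟩
  · refine ⟨0, Or.inl rfl, ?_⟩
    rw [max_eq_right hz.le]
    refine ⟨hz.le, by linarith, le_refl 0, by simp⟩
end

section
/- Let Ω be a nonempty finite index set, π_ω > 0 with Σ_ω π_ω = 1, z : Ω → ℝ, and α ∈ (0,1). Let q ∈ ℝ satisfy Σ_{ω : z_ω ≤ q} π_ω ≥ α and Σ_{ω : z_ω < q} π_ω ≤ α (i.e., q is the lower α-quantile, the value-at-risk VaR_α). Then q minimizes the Rockafellar–Uryasev objective: for every ν ∈ ℝ, h_α(q) ≤ h_α(ν), and consequently CVaR_α(z) = h_α(q); in particular the infimum defining CVaR_α(z) is attained. -/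
open Finset

/-!
At the lower α-quantile `q`, the number `-(1 - α)` is a subgradient of the convex function
`ν ↦ ∑ ω, π ω * max (z ω - ν) 0`: to the right of `q` the slope is `-P(z > q) ≥ -(1 - α)`, to the
left it is `-P(z ≥ q) ≤ -(1 - α)`. Scaling by `1 / (1 - α)` and adding `ν`, the
Rockafellar–Uryasev objective has `0` as a subgradient at `q`, so `q` minimizes it.
-/

/-- At a kink `z = q` both slopes `0` and `-1` are subgradients, so `P` is free there. -/
theorem max_sub_zero_add_mul_ite_le (z q ν : ℝ) (P : Prop) [Decidable P] (h₁ : q < z → P)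
    (h₂ : P → q ≤ z) :
    max (z - q) 0 + (q - ν) * (if P then 1 else 0) ≤ max (z - ν) 0 := by
  split_ifs with hP
  · have := h₂ hP
    rw [max_eq_left (by linarith)]
    linarith [le_max_left (z - ν) 0]
  · have : z ≤ q := not_lt.mp (mt h₁ hP)
    rw [max_eq_right (by linarith)]
    simp

section Subgradient

variable {ι : Type*} [Fintype ι] (w : ι → ℝ) (z : ι → ℝ) (q ν : ℝ)

theorem sum_mul_max_sub_zero_add_le (hw : ∀ i, 0 ≤ w i) (P : ι → Prop) [DecidablePred P]
    (h₁ : ∀ i, q < z i → P i) (h₂ : ∀ i, P i → q ≤ z i) :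
    ∑ i, w i * max (z i - q) 0 + (q - ν) * ∑ i ∈ univ.filter P, w i ≤
      ∑ i, w i * max (z i - ν) 0 := by
  rw [sum_filter, mul_sum, ← sum_add_distrib]
  refine sum_le_sum fun i _ => ?_
  have := mul_le_mul_of_nonneg_left
    (max_sub_zero_add_mul_ite_le (z i) q ν (P i) (h₁ i) (h₂ i)) (hw i)
  split_ifs at this ⊢ <;> linarith

variable {w z q} {α : ℝ}

theorem sum_mul_max_sub_zero_add_le_of_quantile (hw : ∀ i, 0 ≤ w i) (hsum : ∑ i, w i = 1)
    (hq₁ : α ≤ ∑ i ∈ univ.filter (fun i => z i ≤ q), w i)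
    (hq₂ : ∑ i ∈ univ.filter (fun i => z i < q), w i ≤ α) :
    ∑ i, w i * max (z i - q) 0 + (q - ν) * (1 - α) ≤ ∑ i, w i * max (z i - ν) 0 := by
  rcases le_total q ν with hqν | hνq
  · have hsplit := sum_filter_add_sum_filter_not univ (fun i => z i ≤ q) w
    have hright := sum_mul_max_sub_zero_add_le w z q ν hw (fun i => ¬ z i ≤ q)
      (fun _ => not_le.mpr) (fun _ h => (not_le.mp h).le)
    have hslope : (q - ν) * (1 - α) ≤ (q - ν) * ∑ i ∈ univ.filter (fun i => ¬ z i ≤ q), w i :=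
      mul_le_mul_of_nonpos_left (by linarith) (by linarith)
    linarith
  · have hsplit := sum_filter_add_sum_filter_not univ (fun i => z i < q) w
    have hleft := sum_mul_max_sub_zero_add_le w z q ν hw (fun i => ¬ z i < q)
      (fun _ h => not_lt.mpr h.le) (fun _ => not_lt.mp)
    have hslope : (q - ν) * (1 - α) ≤ (q - ν) * ∑ i ∈ univ.filter (fun i => ¬ z i < q), w i :=
      mul_le_mul_of_nonneg_left (by linarith) (by linarith)
    linarith

end Subgradient

theorem var_minimizes_rockafellar_uryasev_general {Ω : Type*} [Fintype Ω]
    (π : Ω → ℝ) (hπ : ∀ ω, 0 < π ω) (hsum : ∑ ω, π ω = 1)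
    (z : Ω → ℝ) (α : ℝ) (hα1 : α < 1) (q : ℝ)
    (hq1 : α ≤ ∑ ω ∈ Finset.univ.filter (fun ω => z ω ≤ q), π ω)
    (hq2 : ∑ ω ∈ Finset.univ.filter (fun ω => z ω < q), π ω ≤ α) :
    (∀ ν : ℝ,
      q + (1 / (1 - α)) * ∑ ω, π ω * max (z ω - q) 0 ≤
      ν + (1 / (1 - α)) * ∑ ω, π ω * max (z ω - ν) 0) ∧
    IsLeast (Set.range (fun ν : ℝ => ν + (1 / (1 - α)) * ∑ ω, π ω * max (z ω - ν) 0))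
      (q + (1 / (1 - α)) * ∑ ω, π ω * max (z ω - q) 0) ∧
    sInf (Set.range (fun ν : ℝ => ν + (1 / (1 - α)) * ∑ ω, π ω * max (z ω - ν) 0)) =
      q + (1 / (1 - α)) * ∑ ω, π ω * max (z ω - q) 0 := by
  have hα : 0 < 1 - α := sub_pos.mpr hα1
  have hmin : ∀ ν : ℝ, q + (1 / (1 - α)) * ∑ ω, π ω * max (z ω - q) 0 ≤
      ν + (1 / (1 - α)) * ∑ ω, π ω * max (z ω - ν) 0 := by
    intro ν
    have hsub := sum_mul_max_sub_zero_add_le_of_quantile ν (fun ω => (hπ ω).le) hsum hq1 hq2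
    calc q + (1 / (1 - α)) * ∑ ω, π ω * max (z ω - q) 0
        = ν + (1 / (1 - α)) * (∑ ω, π ω * max (z ω - q) 0 + (q - ν) * (1 - α)) := by
          field_simp; ring
      _ ≤ ν + (1 / (1 - α)) * ∑ ω, π ω * max (z ω - ν) 0 := by gcongr
  have hleast : IsLeast (Set.range (fun ν : ℝ => ν + (1 / (1 - α)) * ∑ ω, π ω * max (z ω - ν) 0))
      (q + (1 / (1 - α)) * ∑ ω, π ω * max (z ω - q) 0) :=
    ⟨⟨q, rfl⟩, by rintro _ ⟨ν, rfl⟩; exact hmin ν⟩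
  exact ⟨hmin, hleast, hleast.csInf_eq⟩

/-- The lower α-quantile (value-at-risk) minimizes the Rockafellar–Uryasev objective, and
hence CVaR_α(z) = h_α(VaR_α(z)); in particular the infimum defining CVaR is attained. -/
theorem var_minimizes_rockafellar_uryasev {Ω : Type*} [Fintype Ω] [Nonempty Ω]
    (π : Ω → ℝ) (hπ : ∀ ω, 0 < π ω) (hsum : ∑ ω, π ω = 1)
    (z : Ω → ℝ) (α : ℝ) (hα0 : 0 < α) (hα1 : α < 1) (q : ℝ)
    (hq1 : α ≤ ∑ ω ∈ Finset.univ.filter (fun ω => z ω ≤ q), π ω)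
    (hq2 : ∑ ω ∈ Finset.univ.filter (fun ω => z ω < q), π ω ≤ α) :
    (∀ ν : ℝ,
      q + (1 / (1 - α)) * ∑ ω, π ω * max (z ω - q) 0 ≤
      ν + (1 / (1 - α)) * ∑ ω, π ω * max (z ω - ν) 0) ∧
    IsLeast (Set.range (fun ν : ℝ => ν + (1 / (1 - α)) * ∑ ω, π ω * max (z ω - ν) 0))
      (q + (1 / (1 - α)) * ∑ ω, π ω * max (z ω - q) 0) ∧
    sInf (Set.range (fun ν : ℝ => ν + (1 / (1 - α)) * ∑ ω, π ω * max (z ω - ν) 0)) =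
      q + (1 / (1 - α)) * ∑ ω, π ω * max (z ω - q) 0 :=
  var_minimizes_rockafellar_uryasev_general π hπ hsum z α hα1 q hq1 hq2
end

section
/- Let Ω be a nonempty finite index set, π_ω > 0 with Σ_ω π_ω = 1, α ∈ (0,1), and z¹, z² : Ω → ℝ. Then CVaR_α is subadditive: CVaR_α(z¹ + z²) ≤ CVaR_α(z¹) + CVaR_α(z²), where z¹ + z² denotes the componentwise sum of outcome vectors on the common probability space. -/
lemma cvar_bddBelow {Ω : Type*} [Fintype Ω] [Nonempty Ω]
    (π : Ω → ℝ) (hπ : ∀ ω, 0 < π ω) (hsum : ∑ ω, π ω = 1)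
    (α : ℝ) (hα0 : 0 < α) (hα1 : α < 1) (z : Ω → ℝ) :
    BddBelow (Set.range (fun ν : ℝ => ν + (1 / (1 - α)) * ∑ ω, π ω * max (z ω - ν) 0)) := by
  have h1α : 0 < 1 - α := by linarith
  have hc1 : (1:ℝ) ≤ 1 / (1 - α) := by
    rw [le_div_iff₀ h1α]; linarith
  have hc0 : 0 < 1 / (1 - α) := by positivity
  set m : ℝ := Finset.univ.inf' Finset.univ_nonempty z with hm
  refine ⟨m, ?_⟩
  rintro x ⟨ν, rfl⟩
  simp only
  rcases le_or_gt m ν with h | h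
  · have hs : 0 ≤ ∑ ω, π ω * max (z ω - ν) 0 := by
      apply Finset.sum_nonneg; intro ω _
      exact mul_nonneg (hπ ω).le (le_max_right _ _)
    nlinarith
  · have hs : m - ν ≤ ∑ ω, π ω * max (z ω - ν) 0 := by
      calc m - ν = ∑ ω, π ω * (m - ν) := by
            rw [← Finset.sum_mul, hsum, one_mul]
        _ ≤ ∑ ω, π ω * max (z ω - ν) 0 := by
            apply Finset.sum_le_sum; intro ω _
            apply mul_le_mul_of_nonneg_left _ (hπ ω).le
            have : m ≤ z ω := Finset.inf'_le _ (Finset.mem_univ ω)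
            exact le_max_of_le_left (by linarith)
    nlinarith

/-- Subadditivity of CVaR on a common finite probability space:
CVaR_α(z¹ + z²) ≤ CVaR_α(z¹) + CVaR_α(z²). -/
theorem cvar_subadditive {Ω : Type*} [Fintype Ω] [Nonempty Ω]
    (π : Ω → ℝ) (hπ : ∀ ω, 0 < π ω) (hsum : ∑ ω, π ω = 1)
    (α : ℝ) (hα0 : 0 < α) (hα1 : α < 1) (z₁ z₂ : Ω → ℝ) :
    sInf (Set.range (fun ν : ℝ =>
        ν + (1 / (1 - α)) * ∑ ω, π ω * max ((z₁ ω + z₂ ω) - ν) 0)) ≤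
    sInf (Set.range (fun ν : ℝ => ν + (1 / (1 - α)) * ∑ ω, π ω * max (z₁ ω - ν) 0)) +
    sInf (Set.range (fun ν : ℝ => ν + (1 / (1 - α)) * ∑ ω, π ω * max (z₂ ω - ν) 0)) := by
  have h1α : 0 < 1 - α := by linarith
  have hc0 : 0 < 1 / (1 - α) := by positivity
  set f := fun ν : ℝ => ν + (1 / (1 - α)) * ∑ ω, π ω * max ((z₁ ω + z₂ ω) - ν) 0 with hf
  set g₁ := fun ν : ℝ => ν + (1 / (1 - α)) * ∑ ω, π ω * max (z₁ ω - ν) 0 with hg₁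
  set g₂ := fun ν : ℝ => ν + (1 / (1 - α)) * ∑ ω, π ω * max (z₂ ω - ν) 0 with hg₂
  have hbdd : BddBelow (Set.range f) := cvar_bddBelow π hπ hsum α hα0 hα1 _
  have key : ∀ ν₁ ν₂ : ℝ, sInf (Set.range f) ≤ g₁ ν₁ + g₂ ν₂ := by
    intro ν₁ ν₂
    have hle : f (ν₁ + ν₂) ≤ g₁ ν₁ + g₂ ν₂ := by
      simp only [hf, hg₁, hg₂]
      have hsum_le : ∑ ω, π ω * max ((z₁ ω + z₂ ω) - (ν₁ + ν₂)) 0 ≤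
          (∑ ω, π ω * max (z₁ ω - ν₁) 0) + ∑ ω, π ω * max (z₂ ω - ν₂) 0 := by
        rw [← Finset.sum_add_distrib]
        apply Finset.sum_le_sum; intro ω _
        rw [← mul_add]
        apply mul_le_mul_of_nonneg_left _ (hπ ω).le
        apply max_le
        · have := le_max_left (z₁ ω - ν₁) 0
          have := le_max_left (z₂ ω - ν₂) 0
          linarith
        · exact add_nonneg (le_max_right _ _) (le_max_right _ _)
      nlinarith
    exact le_trans (csInf_le hbdd ⟨ν₁ + ν₂, rfl⟩) hle
  have h1 : sInf (Set.range f) - sInf (Set.range g₂) ≤ sInf (Set.range g₁) := by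
    apply le_csInf (Set.range_nonempty _)
    rintro b ⟨ν₁, rfl⟩
    have h2 : sInf (Set.range f) - g₁ ν₁ ≤ sInf (Set.range g₂) := by
      apply le_csInf (Set.range_nonempty _)
      rintro b ⟨ν₂, rfl⟩
      linarith [key ν₁ ν₂]
    linarith
  linarith
end
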